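/- Let n = 3, P = ℚ[X₁,…,X₆], and for I ⊆ {1,…,6} with |I| = k set R_I = ∑_{ν=0}^{⌊(k−1)/2⌋} e_{k−1−2ν}(Xᵢ : i∈I)·X₁^{2ν} and S_I = ∑_{ν=0}^{⌊k/2⌋} e_{k−2ν}(Xᵢ : i∈I)·X₁^{2ν}. Let 𝔞⁻ be the ideal of P generated by all Xᵢ² − Xⱼ², all R_I, S_I with |I| = 4, and all R_I, S_I with |I| = 3 and 1 ∉ I. Then in 𝒜⁻ = P/𝔞⁻ the class of X₂ + X₃ + X₄ + X₅ is non-zero but its square is zero, i.e. (X₂+X₃+X₄+X₅)² ∈ 𝔞⁻ and X₂+X₃+X₄+X₅ ∉ 𝔞⁻. -/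

import Mathlib

/-!
The square: for each of the four 3-subsets `I` of `{2,3,4,5}` one has `R_I = e₂(I) + X₁²`,
and `(X₂ + X₃ + X₄ + X₅)² = ∑ᵢ (Xᵢ² − X₁²) + ∑_I R_I` since every pair lies in exactly two
of them.

The class is non-zero: every generator of `𝔞⁻` is homogeneous of degree at least 2, so it is
killed by the evaluation `Xᵢ ↦ ε` into the dual numbers `ℚ[ε]`, while
`X₂ + X₃ + X₄ + X₅ ↦ 4ε`.
-/

open MvPolynomial Finset

noncomputable section

/-- e_j(Xᵢ : i ∈ I), the elementary symmetric polynomial in the variables indexed by I. -/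
def esF {N : ℕ} (I : Finset (Fin N)) (j : ℕ) : MvPolynomial (Fin N) ℚ :=
  ∑ J ∈ powersetCard j I, ∏ i ∈ J, X i

/-- R_I = ∑_{ν=0}^{⌊(|I|−1)/2⌋} e_{|I|−1−2ν}(Xᵢ : i∈I)·X₁^{2ν}. -/
def RI {N : ℕ} (z : MvPolynomial (Fin N) ℚ) (I : Finset (Fin N)) : MvPolynomial (Fin N) ℚ :=
  ∑ ν ∈ range ((I.card - 1) / 2 + 1), esF I (I.card - 1 - 2 * ν) * z ^ (2 * ν)

/-- S_I = ∑_{ν=0}^{⌊|I|/2⌋} e_{|I|−2ν}(Xᵢ : i∈I)·X₁^{2ν}. -/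
def SI {N : ℕ} (z : MvPolynomial (Fin N) ℚ) (I : Finset (Fin N)) : MvPolynomial (Fin N) ℚ :=
  ∑ ν ∈ range (I.card / 2 + 1), esF I (I.card - 2 * ν) * z ^ (2 * ν)

end

open scoped DualNumber

lemma DualNumber.eps_pow_eq_zero {R : Type*} [Semiring R] {n : ℕ} (hn : 2 ≤ n) :
    (ε : R[ε]) ^ n = 0 := by
  obtain ⟨m, rfl⟩ := Nat.exists_eq_add_of_le hn
  rw [pow_add, DualNumber.eps_pow_two, zero_mul]

namespace MvPolynomial

variable {σ R : Type*} [CommSemiring R]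

lemma IsHomogeneous.aeval_const_eps_eq_zero {p : MvPolynomial σ R} {n : ℕ}
    (hp : p.IsHomogeneous n) (hn : 2 ≤ n) :
    MvPolynomial.aeval (fun _ => (ε : R[ε])) p = 0 := by
  induction hp using IsWeightedHomogeneous.induction_on with
  | zero => simp
  | add p q _ _ hp hq => rw [map_add, hp, hq, add_zero]
  | monomial d r hr =>
    rw [aeval_monomial, Finsupp.prod, prod_pow_eq_pow_sum, ← Finsupp.degree_apply,
      Finsupp.degree_eq_weight_one, ← Pi.one_def, hr, DualNumber.eps_pow_eq_zero hn, mul_zero]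

lemma span_le_ker_aeval_const_eps {s : Set (MvPolynomial σ R)}
    (hs : ∀ f ∈ s, ∃ n, 2 ≤ n ∧ f.IsHomogeneous n) :
    Ideal.span s ≤ RingHom.ker (aeval fun _ => (ε : R[ε]) : MvPolynomial σ R →ₐ[R] R[ε]) := by
  rw [Ideal.span_le]
  intro f hf
  obtain ⟨n, hn, hfn⟩ := hs f hf
  exact hfn.aeval_const_eps_eq_zero hn

end MvPolynomial

section

variable {N : ℕ}

lemma isHomogeneous_esF (I : Finset (Fin N)) (j : ℕ) : (esF I j).IsHomogeneous j := by
  refine IsHomogeneous.sum _ _ _ fun J hJ => ?_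
  simpa [(mem_powersetCard.mp hJ).2] using
    IsHomogeneous.prod J X (fun _ => 1) fun i _ => isHomogeneous_X ℚ i

lemma isHomogeneous_RI {z : MvPolynomial (Fin N) ℚ} (hz : z.IsHomogeneous 1)
    (I : Finset (Fin N)) : (RI z I).IsHomogeneous (I.card - 1) := by
  refine IsHomogeneous.sum _ _ _ fun ν hν => ?_
  have := mem_range.mp hν
  convert (isHomogeneous_esF I _).mul (hz.pow (2 * ν)) using 1
  omega

lemma isHomogeneous_SI {z : MvPolynomial (Fin N) ℚ} (hz : z.IsHomogeneous 1)
    (I : Finset (Fin N)) : (SI z I).IsHomogeneous I.card := by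
  refine IsHomogeneous.sum _ _ _ fun ν hν => ?_
  have := mem_range.mp hν
  convert (isHomogeneous_esF I _).mul (hz.pow (2 * ν)) using 1
  omega

lemma RI_of_card_eq_three (z : MvPolynomial (Fin N) ℚ) {I : Finset (Fin N)}
    (hI : I.card = 3) : RI z I = esF I 2 + z ^ 2 := by
  simp [RI, hI, sum_range_succ, esF]

lemma esF_triple_two {a b c : Fin N} (hab : a ≠ b) (hac : a ≠ c) (hbc : b ≠ c) :
    esF {a, b, c} 2 = X a * X b + X a * X c + X b * X c := by
  have hab_bc : ({a, b} : Finset (Fin N)) ≠ {b, c} := fun h => by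
    simpa [hab, hac] using congrArg (a ∈ ·) h
  have hab_ac : ({a, b} : Finset (Fin N)) ≠ {a, c} := fun h => by
    simpa [hab.symm, hbc] using congrArg (b ∈ ·) h
  have hbc_ac : ({b, c} : Finset (Fin N)) ≠ {a, c} := fun h => by
    simpa [hab.symm, hbc] using congrArg (b ∈ ·) h
  rw [esF, powersetCard_succ_insert (by simp [hab, hac]),
    powersetCard_succ_insert (by simp [hbc])]
  simp only [Nat.succ_eq_add_one, Nat.reduceAdd, card_singleton, Order.lt_two_iff, Std.le_refl,
    powersetCard_eq_empty.mpr, powersetCard_one, map_singleton, Function.Embedding.coeFn_mk,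
    image_singleton, empty_union, map_insert, image_insert, union_insert, singleton_union,
    mem_insert, mem_singleton, hab_bc, hab_ac, hbc_ac, or_self, not_false_eq_true, sum_insert,
    sum_singleton, prod_pair hab, prod_pair hac, prod_pair hbc]
  ring

lemma RI_triple (z : MvPolynomial (Fin N) ℚ) {a b c : Fin N} (hab : a ≠ b) (hac : a ≠ c)
    (hbc : b ≠ c) : RI z {a, b, c} = X a * X b + X a * X c + X b * X c + z ^ 2 := by
  rw [RI_of_card_eq_three z (card_eq_three.mpr ⟨a, b, c, hab, hac, hbc, rfl⟩),
    esF_triple_two hab hac hbc]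

end

theorem stmt12 (aM : Ideal (MvPolynomial (Fin 6) ℚ))
    (haM : aM = Ideal.span
      ({f | ∃ i j : Fin 6, f = X i ^ 2 - X j ^ 2} ∪
       {f | ∃ I : Finset (Fin 6), I.card = 4 ∧ (f = RI (X 0) I ∨ f = SI (X 0) I)} ∪
       {f | ∃ I : Finset (Fin 6), I.card = 3 ∧ (0 : Fin 6) ∉ I ∧
          (f = RI (X 0) I ∨ f = SI (X 0) I)})) :
    (X 1 + X 2 + X 3 + X 4 : MvPolynomial (Fin 6) ℚ) ^ 2 ∈ aM ∧
    (X 1 + X 2 + X 3 + X 4 : MvPolynomial (Fin 6) ℚ) ∉ aM := by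
  have hsq_sub (i : Fin 6) : X i ^ 2 - X 0 ^ 2 ∈ aM :=
    haM ▸ Ideal.subset_span (Or.inl (Or.inl ⟨i, 0, rfl⟩))
  have hRI (a b c : Fin 6)
      (h : a ≠ b ∧ a ≠ c ∧ b ≠ c ∧ (0 : Fin 6) ∉ ({a, b, c} : Finset (Fin 6))) :
      X a * X b + X a * X c + X b * X c + X 0 ^ 2 ∈ aM := by
    obtain ⟨hab, hac, hbc, h0⟩ := h
    rw [← RI_triple _ hab hac hbc, haM]
    exact Ideal.subset_span
      (Or.inr ⟨_, card_eq_three.mpr ⟨a, b, c, hab, hac, hbc, rfl⟩, h0, Or.inl rfl⟩)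
  have hker :
      aM ≤ RingHom.ker (aeval fun _ => (ε : ℚ[ε]) : MvPolynomial (Fin 6) ℚ →ₐ[ℚ] ℚ[ε]) :=
    haM ▸ span_le_ker_aeval_const_eps (by
      rintro f ((⟨i, j, rfl⟩ | ⟨I, hI, rfl | rfl⟩) | ⟨I, hI, -, rfl | rfl⟩)
      · exact ⟨2, le_rfl, (isHomogeneous_X_pow i 2).sub (isHomogeneous_X_pow j 2)⟩
      · exact ⟨_, by omega, isHomogeneous_RI (isHomogeneous_X ℚ 0) I⟩
      · exact ⟨_, by omega, isHomogeneous_SI (isHomogeneous_X ℚ 0) I⟩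
      · exact ⟨_, by omega, isHomogeneous_RI (isHomogeneous_X ℚ 0) I⟩
      · exact ⟨_, by omega, isHomogeneous_SI (isHomogeneous_X ℚ 0) I⟩)
  constructor
  · convert add_mem (add_mem (add_mem (hsq_sub 1) (hsq_sub 2)) (add_mem (hsq_sub 3) (hsq_sub 4)))
      (add_mem (add_mem (hRI 1 2 3 (by decide)) (hRI 1 2 4 (by decide)))
        (add_mem (hRI 1 3 4 (by decide)) (hRI 2 3 4 (by decide)))) using 1
    ring
  · intro hmem
    have h4ε := congrArg TrivSqZeroExt.snd (hker hmem)
    norm_num at h4ε
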